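/- Let X be a real normed space of dimension ≥ n satisfying property (G). The space of multilinear n-functionals on X bounded with respect to the Gähler n-norm, equipped with ‖f‖_{n,n} = sup |f(x₁,...,xₙ)|/‖x₁,...,xₙ‖_G, is a Banach space. -/

import Mathlib

open scoped BigOperators

/-- The Gähler `n`-norm on a real normed space. -/
noncomputable def gahler {X : Type*} [NormedAddCommGroup X] [NormedSpace ℝ X] {n : ℕ}
    (x : Fin n → X) : ℝ :=
  sSup {r | ∃ f : Fin n → (X →L[ℝ] ℝ), (∀ i, ‖f i‖ ≤ 1) ∧
    r = |Matrix.det (Matrix.of fun i j => f j (x i))|}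

/-- The Miličić functional. -/
noncomputable def milicic {X : Type*} [NormedAddCommGroup X] [NormedSpace ℝ X]
    (τp τm : X → X → ℝ) (x y : X) : ℝ :=
  ‖x‖ / 2 * (τm x y + τp x y)

/-- `‖f‖_{n,n}`: the smallest constant `K ≥ 0` with `|f(x₁,…,xₙ)| ≤ K ‖x₁,…,xₙ‖_G`. -/
noncomputable def normnn {X : Type*} [NormedAddCommGroup X] [NormedSpace ℝ X] {n : ℕ}
    (f : MultilinearMap ℝ (fun _ : Fin n => X) ℝ) : ℝ :=
  sInf {K | 0 ≤ K ∧ ∀ x : Fin n → X, |f x| ≤ K * gahler x}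

/-!
The Cauchy condition in `‖·‖_{n,n}` gives `|f k x - f l x| ≤ ε ‖x‖_G` for all large `k, l`,
so `f m x` converges in `ℝ` for every `x`, and the pointwise limit `F` is again multilinear.
Letting `l → ∞` in that estimate yields `|f k x - F x| ≤ ε ‖x‖_G` uniformly in `x`, which shows
both that `F` is bounded and that `‖f k - F‖_{n,n} ≤ ε`.
-/

open Filter Topology

section PointwiseLimit

variable {α R ι M₂ : Type*} {M : ι → Type*} [DecidableEq ι] [Semiring R]
  [∀ i, AddCommMonoid (M i)] [∀ i, Module R (M i)] [AddCommMonoid M₂] [Module R M₂]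
  [TopologicalSpace M₂] [T2Space M₂] [ContinuousAdd M₂] [ContinuousConstSMul R M₂]
  {l : Filter α} [l.NeBot]

def multilinearMapOfTendsto (f : (∀ i, M i) → M₂) (g : α → MultilinearMap R M M₂)
    (h : Tendsto (fun a x => g a x) l (𝓝 f)) : MultilinearMap R M M₂ where
  toFun := f
  map_update_add' x i a b := by
    refine tendsto_nhds_unique (tendsto_pi_nhds.1 h _) ?_
    simp_rw [MultilinearMap.map_update_add]
    exact (tendsto_pi_nhds.1 h _).add (tendsto_pi_nhds.1 h _)
  map_update_smul' x i c a := by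
    refine tendsto_nhds_unique (tendsto_pi_nhds.1 h _) ?_
    simp_rw [MultilinearMap.map_update_smul]
    exact (tendsto_pi_nhds.1 h _).const_smul c

end PointwiseLimit

section WeightedUniformLimit

variable {α : Type*} {γ : α → ℝ} {f : ℕ → α → ℝ}

theorem cauchySeq_apply_of_abs_sub_le_mul
    (hf : ∀ ε > 0, ∃ N, ∀ k ≥ N, ∀ l ≥ N, ∀ x, |f k x - f l x| ≤ ε * γ x) (x : α) :
    CauchySeq (f · x) := by
  rw [Metric.cauchySeq_iff']
  intro ε hε
  obtain ⟨N, hN⟩ := hf (ε / (|γ x| + 1)) (by positivity)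
  refine ⟨N, fun k hk => ?_⟩
  rw [Real.dist_eq]
  calc |f k x - f N x| ≤ ε / (|γ x| + 1) * γ x := hN k hk N le_rfl x
    _ ≤ ε / (|γ x| + 1) * |γ x| := by gcongr; exact le_abs_self _
    _ < ε / (|γ x| + 1) * (|γ x| + 1) := by gcongr; linarith
    _ = ε := div_mul_cancel₀ ε (by positivity)

theorem abs_sub_le_mul_of_tendsto {F : α → ℝ}
    (hf : ∀ ε > 0, ∃ N, ∀ k ≥ N, ∀ l ≥ N, ∀ x, |f k x - f l x| ≤ ε * γ x)
    (hF : ∀ x, Tendsto (f · x) atTop (𝓝 (F x))) :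
    ∀ ε > 0, ∃ N, ∀ k ≥ N, ∀ x, |f k x - F x| ≤ ε * γ x := by
  intro ε hε
  obtain ⟨N, hN⟩ := hf ε hε
  refine ⟨N, fun k hk x => le_of_tendsto ((tendsto_const_nhds.sub (hF x)).abs) ?_⟩
  filter_upwards [eventually_ge_atTop N] with l hl
  exact hN k hk l hl x

end WeightedUniformLimit

section Gahler

variable {X : Type*} [NormedAddCommGroup X] [NormedSpace ℝ X] {n : ℕ}

theorem gahler_nonneg (x : Fin n → X) : 0 ≤ gahler x :=
  Real.sSup_nonneg <| by
    rintro r ⟨f, -, rfl⟩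
    exact abs_nonneg _

def GahlerBounded (g : MultilinearMap ℝ (fun _ : Fin n => X) ℝ) : Prop :=
  ∃ K > 0, ∀ x : Fin n → X, |g x| ≤ K * gahler x

theorem normnn_nonneg (g : MultilinearMap ℝ (fun _ : Fin n => X) ℝ) : 0 ≤ normnn g :=
  Real.sInf_nonneg fun _ h => h.1

theorem normnn_le {g : MultilinearMap ℝ (fun _ : Fin n => X) ℝ} {K : ℝ} (hK0 : 0 ≤ K)
    (hK : ∀ x, |g x| ≤ K * gahler x) : normnn g ≤ K :=
  csInf_le ⟨0, fun _ h => h.1⟩ ⟨hK0, hK⟩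

namespace GahlerBounded

variable {g h : MultilinearMap ℝ (fun _ : Fin n => X) ℝ}

theorem sub (hg : GahlerBounded g) (hh : GahlerBounded h) : GahlerBounded (g - h) := by
  obtain ⟨K, hK, hgK⟩ := hg
  obtain ⟨L, hL, hhL⟩ := hh
  refine ⟨K + L, by positivity, fun x => ?_⟩
  calc |g x - h x| ≤ |g x| + |h x| := abs_sub _ _
    _ ≤ K * gahler x + L * gahler x := add_le_add (hgK x) (hhL x)
    _ = (K + L) * gahler x := by ring

theorem of_abs_sub_le (hg : GahlerBounded g) {c : ℝ} (hc : 0 ≤ c)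
    (hgh : ∀ x, |g x - h x| ≤ c * gahler x) : GahlerBounded h := by
  obtain ⟨K, hK, hgK⟩ := hg
  refine ⟨K + c, by positivity, fun x => ?_⟩
  calc |h x| ≤ |g x| + |g x - h x| := by
        simpa only [Real.norm_eq_abs] using norm_le_norm_add_norm_sub (g x) (h x)
    _ ≤ K * gahler x + c * gahler x := add_le_add (hgK x) (hgh x)
    _ = (K + c) * gahler x := by ring

theorem abs_apply_le_normnn_mul (hg : GahlerBounded g) (x : Fin n → X) :
    |g x| ≤ normnn g * gahler x := by
  obtain ⟨K, hK, hgK⟩ := hg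
  rcases (gahler_nonneg x).eq_or_lt with hx | hx
  · simpa [← hx] using hgK x
  · rw [← div_le_iff₀ hx]
    exact le_csInf ⟨K, hK.le, hgK⟩ fun L hL => (div_le_iff₀ hx).2 (hL.2 x)

end GahlerBounded

theorem tendsto_normnn_sub_of_abs_sub_le {f : ℕ → MultilinearMap ℝ (fun _ : Fin n => X) ℝ}
    {F : MultilinearMap ℝ (fun _ : Fin n => X) ℝ}
    (hF : ∀ ε > 0, ∃ N, ∀ k ≥ N, ∀ x, |f k x - F x| ≤ ε * gahler x) :
    Tendsto (fun k => normnn (f k - F)) atTop (𝓝 0) := by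
  refine tendsto_order.2 ⟨fun a ha => .of_forall fun k => ha.trans_le (normnn_nonneg _),
    fun a ha => ?_⟩
  obtain ⟨N, hN⟩ := hF (a / 2) (by positivity)
  filter_upwards [eventually_ge_atTop N] with k hk
  exact (normnn_le (by positivity) (hN k hk)).trans_lt (by linarith)

end Gahler

theorem stmt16_general {X : Type*} [NormedAddCommGroup X] [NormedSpace ℝ X] (n : ℕ)
    (f : ℕ → MultilinearMap ℝ (fun _ : Fin n => X) ℝ)
    (hbdd : ∀ m, ∃ K > 0, ∀ x : Fin n → X, |(f m) x| ≤ K * gahler x)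
    (hcauchy : ∀ ε > (0 : ℝ), ∃ N, ∀ k l, N ≤ k → N ≤ l → normnn (f k - f l) < ε) :
    ∃ F : MultilinearMap ℝ (fun _ : Fin n => X) ℝ,
      (∃ K > 0, ∀ x : Fin n → X, |F x| ≤ K * gahler x) ∧
      Filter.Tendsto (fun m => normnn (f m - F)) Filter.atTop (nhds 0) := by
  have hbdd : ∀ m, GahlerBounded (f m) := hbdd
  have hf : ∀ ε > 0, ∃ N, ∀ k ≥ N, ∀ l ≥ N, ∀ x, |f k x - f l x| ≤ ε * gahler x := by
    intro ε hε
    obtain ⟨N, hN⟩ := hcauchy ε hε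
    refine ⟨N, fun k hk l hl x => ?_⟩
    calc |f k x - f l x| ≤ normnn (f k - f l) * gahler x :=
          ((hbdd k).sub (hbdd l)).abs_apply_le_normnn_mul x
      _ ≤ ε * gahler x := by gcongr; exacts [gahler_nonneg x, (hN k l hk hl).le]
  choose L hL using fun x =>
    cauchySeq_tendsto_of_complete (cauchySeq_apply_of_abs_sub_le_mul hf x)
  let F := multilinearMapOfTendsto L f (tendsto_pi_nhds.2 hL)
  have hF : ∀ ε > 0, ∃ N, ∀ k ≥ N, ∀ x, |f k x - F x| ≤ ε * gahler x :=
    abs_sub_le_mul_of_tendsto hf hL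
  obtain ⟨N, hN⟩ := hF 1 one_pos
  exact ⟨F, (hbdd N).of_abs_sub_le zero_le_one (hN N le_rfl),
    tendsto_normnn_sub_of_abs_sub_le hF⟩

/-- The `n`-dual space of `(X, ‖·,…,·‖_G)` is a Banach space: every sequence of multilinear
`n`-functionals bounded in the Gähler `n`-norm which is Cauchy for `‖·‖_{n,n}` converges in
`‖·‖_{n,n}` to a bounded multilinear `n`-functional. -/
theorem stmt16 {X : Type*} [NormedAddCommGroup X] [NormedSpace ℝ X] (n : ℕ)
    (hdim : (n : Cardinal) ≤ Module.rank ℝ X)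
    (τp τm : X → X → ℝ)
    (hτp : ∀ x y : X, Filter.Tendsto (fun t : ℝ => (‖x + t • y‖ - ‖x‖) / t)
      (nhdsWithin 0 (Set.Ioi 0)) (nhds (τp x y)))
    (hτm : ∀ x y : X, Filter.Tendsto (fun t : ℝ => (‖x + t • y‖ - ‖x‖) / t)
      (nhdsWithin 0 (Set.Iio 0)) (nhds (τm x y)))
    (hG : ∀ x : X, IsLinearMap ℝ (fun y => milicic τp τm x y))
    (f : ℕ → MultilinearMap ℝ (fun _ : Fin n => X) ℝ)
    (hbdd : ∀ m, ∃ K > 0, ∀ x : Fin n → X, |(f m) x| ≤ K * gahler x)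
    (hcauchy : ∀ ε > (0 : ℝ), ∃ N, ∀ k l, N ≤ k → N ≤ l → normnn (f k - f l) < ε) :
    ∃ F : MultilinearMap ℝ (fun _ : Fin n => X) ℝ,
      (∃ K > 0, ∀ x : Fin n → X, |F x| ≤ K * gahler x) ∧
      Filter.Tendsto (fun m => normnn (f m - F)) Filter.atTop (nhds 0) :=
  stmt16_general n f hbdd hcauchy
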